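/- arXiv:1707.06391 — 5 statements merged into one kernel-verified Lean document; each statement's English description precedes it below -/
import Mathlib

section
/- Let n ≥ 2 and f : ZMod n → ℕ with ∑_v f v = n. Suppose there exists a hole (f v = 0) and a multinode (f w ≥ 2). Then there exists a clockwise chain: a node u and an integer k with 1 ≤ k ≤ n - 1 such that f u ≥ 2, f (u + i) = 1 for all 1 ≤ i < k, and f (u + k) = 0. -/
theorem stmt_3 (n : ℕ) [NeZero n] (hn : 2 ≤ n) (f : ZMod n → ℕ)
    (hsum : ∑ v, f v = n)
    (hhole : ∃ v, f v = 0) (hmulti : ∃ w, 2 ≤ f w) :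
    ∃ (u : ZMod n) (k : ℕ), 1 ≤ k ∧ k ≤ n - 1 ∧ 2 ≤ f u ∧
      (∀ i : ℕ, 1 ≤ i → i < k → f (u + (i : ZMod n)) = 1) ∧
      f (u + (k : ZMod n)) = 0 := by
  obtain ⟨v, hv⟩ := hhole
  obtain ⟨m, hm⟩ := hmulti
  set d : ℕ := (v - m).val with hd
  have hmv : m ≠ v := by
    rintro rfl; omega
  have hdn : d < n := ZMod.val_lt _
  have hd0 : d ≠ 0 := by
    intro h
    have : v - m = 0 := by
      have := ZMod.val_eq_zero (v - m)
      rw [← hd, h] at this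
      simpa using this.mp rfl
    exact hmv (sub_eq_zero.mp this).symm
  have hcast : ((d : ZMod n)) = v - m := ZMod.natCast_rightInverse (v - m)
  have hPd : 1 ≤ d ∧ f (m + (d : ZMod n)) = 0 := by
    refine ⟨Nat.one_le_iff_ne_zero.mpr hd0, ?_⟩
    rw [hcast]; simpa using hv
  -- k = least j with 1 ≤ j and f (m + j) = 0
  have hex : ∃ j : ℕ, 1 ≤ j ∧ f (m + (j : ZMod n)) = 0 := ⟨d, hPd⟩
  set k := Nat.find hex with hk
  obtain ⟨hk1, hk0⟩ := Nat.find_spec hex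
  have hkd : k ≤ d := Nat.find_le hPd
  have hkmin : ∀ j, 1 ≤ j → j < k → f (m + (j : ZMod n)) ≠ 0 := by
    intro j hj1 hjk h
    exact Nat.find_min hex hjk ⟨hj1, h⟩
  -- i* = greatest i ≤ k-1 with 2 ≤ f (m + i)
  set P : ℕ → Prop := fun i => 2 ≤ f (m + (i : ZMod n)) with hP
  have hP0 : P 0 := by simpa [hP] using hm
  set i : ℕ := Nat.findGreatest P (k - 1) with hi
  have hispec : P i := Nat.findGreatest_spec (Nat.zero_le _) hP0
  have hile : i ≤ k - 1 := Nat.findGreatest_le _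
  have himax : ∀ j, i < j → j ≤ k - 1 → ¬ P j := fun j hj hjk =>
    Nat.findGreatest_is_greatest hj hjk
  refine ⟨m + (i : ZMod n), k - i, by omega, by omega, hispec, ?_, ?_⟩
  · intro j hj1 hjk
    have h1 : i + j < k := by omega
    have hne : f (m + ((i + j : ℕ) : ZMod n)) ≠ 0 := hkmin _ (by omega) h1
    have hlt : ¬ P (i + j) := himax _ (by omega) (by omega)
    rw [hP] at hlt
    push_cast at hne hlt
    rw [add_assoc]
    omega
  · have hik : ((k : ℕ) : ZMod n) = (i : ZMod n) + ((k - i : ℕ) : ZMod n) := by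
      rw [← Nat.cast_add]; congr 1; omega
    have := hk0
    rw [← hk, hik, ← add_assoc] at this
    exact this
end

section
/- Let n ≥ 2 and f : ZMod n → ℕ with ∑_v f v = n and f not identically 1. Then there exists g : ZMod n → ℕ and d : ZMod n → ℕ with d v ≤ f v for all v, d v ≤ 1 for all v, g v = f v - d v + d (v - 1) for all v, ∑_v g v = n, and |{v : g v = 0}| < |{v : f v = 0}|. -/
/-!
Since `∑ f = n` and `f ≠ 1`, some node `u` holds at least two robots and some node is a hole.
Walk clockwise from `u` up to the first hole `u + k` and let every node of the chain
`u, u + 1, …, u + k - 1` (all of them occupied) send one robot forward. A node of the chain other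
than `u` loses one robot and receives one, `u` keeps at least one, and the hole `u + k` is filled,
so no hole is created and one disappears.
-/

open Finset

theorem indicator_one_le_of_ne_zero {α : Type*} {f : α → ℕ} {S : Set α}
    (hS : ∀ v ∈ S, f v ≠ 0) (v : α) : S.indicator 1 v ≤ f v := by
  by_cases hv : v ∈ S
  · simpa [hv, Nat.one_le_iff_ne_zero] using hS v hv
  · simp [hv]

section RingMove

variable {G : Type*} [AddGroupWithOne G]

/-- The configuration after every node `v` sends `d v` robots to `v + 1`. -/
def ringMove (f d : G → ℕ) (v : G) : ℕ := f v - d v + d (v - 1)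

theorem sum_ringMove [Fintype G] {f d : G → ℕ} (hd : ∀ v, d v ≤ f v) :
    ∑ v, ringMove f d v = ∑ v, f v := by
  have hshift : ∑ v, d (v - 1) = ∑ v, d v :=
    Fintype.sum_equiv (Equiv.subRight 1) _ _ fun _ => rfl
  calc ∑ v, ringMove f d v = ∑ v, (f v - d v) + ∑ v, d (v - 1) := sum_add_distrib
    _ = ∑ v, (f v - d v + d v) := by rw [hshift, sum_add_distrib]
    _ = ∑ v, f v := sum_congr rfl fun v _ => Nat.sub_add_cancel (hd v)

theorem eq_zero_of_ringMove_indicator_eq_zero {f : G → ℕ} {S : Set G}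
    (hchain : ∀ v ∈ S, f v = 1 → v - 1 ∈ S) {v : G} (hv : ringMove f (S.indicator 1) v = 0) :
    f v = 0 := by
  unfold ringMove at hv
  by_cases hvS : v ∈ S
  · rw [Set.indicator_of_mem hvS, Pi.one_apply] at hv
    by_cases hprev : v - 1 ∈ S
    · simp [hprev] at hv
    · rw [Set.indicator_of_notMem hprev] at hv
      by_contra hf
      exact hprev (hchain v hvS (by omega))
  · rw [Set.indicator_of_notMem hvS] at hv
    omega

theorem ringMove_indicator_ne_zero {f : G → ℕ} {S : Set G} {v : G} (hv : v - 1 ∈ S) :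
    ringMove f (S.indicator 1) v ≠ 0 := by
  simp [ringMove, hv]

theorem exists_clockwise_chain {f : G → ℕ} {u : G} (hu : 2 ≤ f u)
    (hhole : ∃ t : ℕ, 0 < t ∧ f (u + t) = 0) :
    ∃ S : Set G, (∀ v ∈ S, f v ≠ 0) ∧ (∀ v ∈ S, f v = 1 → v - 1 ∈ S) ∧
      ∃ h, f h = 0 ∧ h - 1 ∈ S := by
  classical
  have hsucc (j : ℕ) : u + ((j + 1 : ℕ) : G) - 1 = u + j := by
    rw [Nat.cast_succ, ← add_assoc, add_sub_cancel_right]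
  obtain ⟨hkpos, hk⟩ := Nat.find_spec hhole
  refine ⟨(fun i : ℕ => u + i) '' Set.Iio (Nat.find hhole), ?_, ?_, ?_⟩
  · rintro _ ⟨i, hi, rfl⟩
    rcases Nat.eq_zero_or_pos i with rfl | hipos
    · simp only [Nat.cast_zero, add_zero]; omega
    · exact fun h0 => Nat.find_min hhole hi ⟨hipos, h0⟩
  · rintro _ ⟨_ | j, hj, rfl⟩ h1
    · simp only [Nat.cast_zero, add_zero] at h1; omega
    · exact ⟨j, lt_trans j.lt_succ_self hj, (hsucc j).symm⟩
  · obtain ⟨j, hj⟩ := Nat.exists_eq_succ_of_ne_zero hkpos.ne'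
    refine ⟨_, hk, j, ?_, ?_⟩
    · simp [hj]
    · simp only [hj, hsucc]

end RingMove

section Occupancy

variable {α : Type*} [Fintype α] {f : α → ℕ}

theorem eq_one_of_sum_eq_card_of_le_one (hsum : ∑ v, f v = Fintype.card α)
    (hle : ∀ v, f v ≤ 1) : f = fun _ => 1 := by
  have := (sum_eq_sum_iff_of_le (s := univ) fun v _ => hle v).mp (by simp [hsum])
  exact funext fun v => this v (mem_univ v)

theorem eq_one_of_sum_eq_card_of_one_le (hsum : ∑ v, f v = Fintype.card α)
    (hle : ∀ v, 1 ≤ f v) : f = fun _ => 1 := by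
  have := (sum_eq_sum_iff_of_le (s := univ) fun v _ => hle v).mp (by simp [hsum])
  exact funext fun v => (this v (mem_univ v)).symm

theorem exists_two_le_of_sum_eq_card (hsum : ∑ v, f v = Fintype.card α)
    (hf : f ≠ fun _ => 1) : ∃ u, 2 ≤ f u := by
  by_contra! h
  exact hf (eq_one_of_sum_eq_card_of_le_one hsum fun v => Nat.le_of_lt_succ (h v))

theorem exists_eq_zero_of_sum_eq_card (hsum : ∑ v, f v = Fintype.card α)
    (hf : f ≠ fun _ => 1) : ∃ h, f h = 0 := by
  by_contra! h
  exact hf (eq_one_of_sum_eq_card_of_one_le hsum fun v => Nat.one_le_iff_ne_zero.mpr (h v))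

end Occupancy

theorem ZMod.exists_pos_natCast_add_eq {n : ℕ} [NeZero n] (u v : ZMod n) :
    ∃ t : ℕ, 0 < t ∧ u + t = v :=
  ⟨(v - u).val + n, by have := NeZero.pos n; omega, by simp⟩

theorem stmt_5 (n : ℕ) [NeZero n] (f : ZMod n → ℕ)
    (hsum : ∑ v, f v = n) (hnd : f ≠ fun _ => 1) :
    ∃ g d : ZMod n → ℕ,
      (∀ v, d v ≤ f v) ∧ (∀ v, d v ≤ 1) ∧
      (∀ v, g v = f v - d v + d (v - 1)) ∧
      (∑ v, g v = n) ∧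
      (Finset.univ.filter fun v => g v = 0).card
        < (Finset.univ.filter fun v => f v = 0).card := by
  replace hsum : ∑ v, f v = Fintype.card (ZMod n) := hsum.trans (ZMod.card n).symm
  obtain ⟨u, hu⟩ := exists_two_le_of_sum_eq_card hsum hnd
  obtain ⟨h, hh⟩ := exists_eq_zero_of_sum_eq_card hsum hnd
  obtain ⟨t, ht, rfl⟩ := ZMod.exists_pos_natCast_add_eq u h
  obtain ⟨S, hS, hchain, hole, hhole, hprev⟩ := exists_clockwise_chain hu ⟨t, ht, hh⟩
  have hd := indicator_one_le_of_ne_zero hS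
  refine ⟨ringMove f (S.indicator 1), S.indicator 1, hd, fun v => ?_, fun v => rfl,
    (sum_ringMove hd).trans (hsum.trans (ZMod.card n)), card_lt_card ?_⟩
  · by_cases hv : v ∈ S <;> simp [hv]
  refine (ssubset_iff_of_subset fun v => ?_).mpr ⟨hole, ?_, ?_⟩
  · simpa using eq_zero_of_ringMove_indicator_eq_zero hchain
  · simpa using hhole
  · simpa using ringMove_indicator_ne_zero hprev
end

section
/- Let n ≥ 3 and f : ZMod n → ℕ with ∑_v f v = n. Suppose there exists a node v such that f(v-1) = f v = f(v+1) = 0 (three consecutive holes). Then for every g : ZMod n → ℕ obtained from f by a one-step movement — i.e., there exist c, a : ZMod n → ℕ (clockwise and anticlockwise movers) with c v + a v ≤ f v and g v = f v - c v - a v + c(v-1) + a(v+1) for all v — we have g v = 0; in particular g is not identically 1. -/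
theorem stmt_10 (n : ℕ) [NeZero n] (hn : 3 ≤ n) (f : ZMod n → ℕ)
    (hsum : ∑ v, f v = n) (v : ZMod n)
    (h0 : f (v - 1) = 0) (h1 : f v = 0) (h2 : f (v + 1) = 0)
    (g c a : ZMod n → ℕ)
    (hca : ∀ w, c w + a w ≤ f w)
    (hg : ∀ w, g w = f w - c w - a w + c (w - 1) + a (w + 1)) :
    g v = 0 ∧ g ≠ fun _ => 1 := by
  have hc : c (v - 1) = 0 := by
    have := hca (v - 1); omega
  have ha : a (v + 1) = 0 := by
    have := hca (v + 1); omega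
  have hgv : g v = 0 := by
    have := hg v; omega
  refine ⟨hgv, fun h => ?_⟩
  have : g v = 1 := by rw [h]
  omega
end

section
/- Let n ≥ 2 and f : ZMod n → ℕ with ∑_v f v = n and at least one hole. For any one-step movement given by c, a : ZMod n → ℕ with c v + a v ≤ f v, define g v = f v - c v - a v + c(v-1) + a(v+1). If g is identically 1 (dispersion achieved), then there exists an edge e and a hole h of f such that exactly one robot entered h, and it crossed edge e; consequently, the modified movement in which all robots planning to cross e instead stay put yields a configuration g' with g' h = 0 (a hole remains). -/
theorem stmt_11 (n : ℕ) [NeZero n] (hn : 2 ≤ n) (f : ZMod n → ℕ)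
    (hsum : ∑ v, f v = n) (hhole : ∃ v, f v = 0)
    (c a : ZMod n → ℕ) (hca : ∀ w, c w + a w ≤ f w)
    (g : ZMod n → ℕ)
    (hg : ∀ w, g w = f w - c w - a w + c (w - 1) + a (w + 1))
    (hdisp : ∀ w, g w = 1) :
    ∃ e h : ZMod n, f h = 0 ∧ c (h - 1) + a (h + 1) = 1 ∧
      ((e = h - 1 ∧ c (h - 1) = 1) ∨ (e = h ∧ a (h + 1) = 1)) ∧
      ∀ c' a' : ZMod n → ℕ,
        ((∀ w, w ≠ e → c' w = c w) ∧ c' e = 0 ∧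
         (∀ w, w ≠ e + 1 → a' w = a w) ∧ a' (e + 1) = 0) →
        ∀ g' : ZMod n → ℕ,
          (∀ w, g' w = f w - c' w - a' w + c' (w - 1) + a' (w + 1)) →
          g' h = 0 := by
  obtain ⟨h, hf⟩ := hhole
  have hone : (1 : ZMod n) ≠ 0 := by
    have : (1 : ZMod n).val = 1 := by
      rw [ZMod.val_one_eq_one_mod, Nat.mod_eq_of_lt (by omega)]
    intro h0; rw [h0] at this; simp at this
  have hm1 : h - 1 ≠ h := fun heq => hone (sub_eq_self.mp heq)
  have hp1 : h + 1 ≠ h := fun heq => hone (add_eq_left.mp heq)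
  have hch : c h = 0 := by have := hca h; omega
  have hah : a h = 0 := by have := hca h; omega
  have hkey : c (h - 1) + a (h + 1) = 1 := by
    have := hg h; rw [hdisp h] at this; omega
  rcases Nat.eq_zero_or_pos (c (h - 1)) with hc0 | hc1
  · -- a (h+1) = 1, take e = h
    refine ⟨h, h, hf, hkey, Or.inr ⟨rfl, by omega⟩, ?_⟩
    rintro c' a' ⟨hc'ne, hc'e, ha'ne, ha'e⟩ g' hg'
    have h1 : c' (h - 1) = c (h - 1) := hc'ne _ hm1
    have h2 : c' h = 0 := hc'e
    have h3 : a' h = a h := by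
      apply ha'ne; intro heq; exact hone (by linear_combination -heq)
    rw [hg' h, h1, h2, h3, ha'e, hf, hah, hc0]
  · -- c (h-1) = 1, take e = h - 1
    refine ⟨h - 1, h, hf, hkey, Or.inl ⟨rfl, by omega⟩, ?_⟩
    rintro c' a' ⟨hc'ne, hc'e, ha'ne, ha'e⟩ g' hg'
    have he1 : h - 1 + 1 = h := by ring
    have h2 : c' h = 0 := by
      rw [hc'ne h (Ne.symm hm1), hch]
    have h3 : a' h = 0 := by
      rcases eq_or_ne h (h - 1 + 1) with heq | hne
      · rw [heq, ha'e]
      · rw [ha'ne h hne, hah]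
    have h4 : a' (h + 1) = a (h + 1) := by
      apply ha'ne; rw [he1]; exact hp1
    have ha1 : a (h + 1) = 0 := by omega
    rw [hg' h, hc'e, h2, h3, h4, hf, ha1]
end

section
/- Let n ≥ 2 and k ≥ 1. Suppose an n-node ring configuration consists of exactly k multinodes each with exactly 2 robots, exactly k holes, and n - 2k singleton nodes, arranged so that multinodes and holes alternate around the ring (between any two cyclically consecutive special nodes — where special means hole or multinode — all nodes are singletons, and consecutive special nodes alternate between multinode and hole). If moreover for every multinode the two chains on its two sides (ending at the adjacent holes) have equal length, then n is even. -/
theorem stmt_12 (n : ℕ) [NeZero n] (hn : 2 ≤ n) (k : ℕ) (hk : 1 ≤ k)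
    (f : ZMod n → ℕ) (hsum : ∑ v, f v = n)
    (hmult : ∀ v, 2 ≤ f v → f v = 2)
    (hkm : (Finset.univ.filter fun v => f v = 2).card = k)
    (hkh : (Finset.univ.filter fun v => f v = 0).card = k)
    (hks : (Finset.univ.filter fun v => f v = 1).card = n - 2 * k)
    (halt_m : ∀ v, f v = 2 →
      ∃ j₁ j₂ : ℕ, 1 ≤ j₁ ∧ 1 ≤ j₂ ∧
        f (v + (j₁ : ZMod n)) = 0 ∧ f (v - (j₂ : ZMod n)) = 0 ∧
        (∀ i : ℕ, 1 ≤ i → i < j₁ → f (v + (i : ZMod n)) = 1) ∧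
        (∀ i : ℕ, 1 ≤ i → i < j₂ → f (v - (i : ZMod n)) = 1) ∧
        j₁ = j₂)
    (halt_h : ∀ v, f v = 0 →
      ∃ j₁ j₂ : ℕ, 1 ≤ j₁ ∧ 1 ≤ j₂ ∧
        f (v + (j₁ : ZMod n)) = 2 ∧ f (v - (j₂ : ZMod n)) = 2 ∧
        (∀ i : ℕ, 1 ≤ i → i < j₁ → f (v + (i : ZMod n)) = 1) ∧
        (∀ i : ℕ, 1 ≤ i → i < j₂ → f (v - (i : ZMod n)) = 1)) :
    2 ∣ n := by
  classical
  choose J J₂ hJ1 hJ2' hH₁ hH₂0 hS₁ hS₂0 hJeq using halt_m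
  -- backward facts in terms of J
  have hH₂ : ∀ v (hv : f v = 2), f (v - ((J v hv : ℕ) : ZMod n)) = 0 := by
    intro v hv; rw [hJeq v hv]; exact hH₂0 v hv
  have hS₂ : ∀ v (hv : f v = 2), ∀ i, 1 ≤ i → i < J v hv → f (v - (i : ZMod n)) = 1 := by
    intro v hv i h1 h2
    exact hS₂0 v hv i h1 (by rw [hJeq v hv] at h2; exact h2)
  have hval : ∀ y, f y = 0 ∨ f y = 1 ∨ f y = 2 := by
    intro y
    rcases Nat.lt_or_ge (f y) 2 with h | h
    · omega
    · right; right; exact hmult y h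
  -- uniqueness of "first non-singleton" index along a sequence
  have uniqS : ∀ (s : ℕ → ZMod n) (a b : ℕ), 1 ≤ a → 1 ≤ b →
      f (s a) ≠ 1 → f (s b) ≠ 1 →
      (∀ i, 1 ≤ i → i < a → f (s i) = 1) →
      (∀ i, 1 ≤ i → i < b → f (s i) = 1) → a = b := by
    intro s a b ha hb hfa hfb hA hB
    rcases lt_trichotomy a b with h | h | h
    · exact absurd (hB a ha h) hfa
    · exact h
    · exact absurd (hA b hb h) hfb
  -- J v < n
  have hjlt : ∀ v (hv : f v = 2), J v hv < n := by
    intro v hv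
    by_contra h
    push_neg at h
    rcases eq_or_lt_of_le h with h | h
    · have h0 := hH₁ v hv
      rw [← h, ZMod.natCast_self] at h0
      simp at h0
      omega
    · have h1 := hS₁ v hv (J v hv - n) (by omega) (by omega)
      have : ((J v hv - n : ℕ) : ZMod n) = ((J v hv : ℕ) : ZMod n) := by
        rw [Nat.cast_sub (le_of_lt h), ZMod.natCast_self]; ring
      rw [this] at h1
      have h0 := hH₁ v hv
      omega
  -- 2 * J v ≤ n
  have h2j : ∀ v (hv : f v = 2), 2 * J v hv ≤ n := by
    intro v hv
    by_contra h
    push_neg at h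
    have hlt := hjlt v hv
    have h1 := hS₁ v hv (n - J v hv) (by omega) (by omega)
    have : ((n - J v hv : ℕ) : ZMod n) = -((J v hv : ℕ) : ZMod n) := by
      rw [Nat.cast_sub (le_of_lt hlt), ZMod.natCast_self]; ring
    rw [this] at h1
    rw [← sub_eq_add_neg] at h1
    have h0 := hH₂ v hv
    omega
  -- the block of a multinode
  set B : ZMod n → Finset (ZMod n) := fun v =>
    if h : f v = 2 then
      (Finset.range (2 * J v h)).image
        (fun t : ℕ => v + (t : ZMod n) - ((J v h - 1 : ℕ) : ZMod n))
    else ∅ with hB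
  have memB : ∀ v (hv : f v = 2) (x : ZMod n),
      x ∈ B v ↔ ∃ t, t < 2 * J v hv ∧
        v + (t : ZMod n) - ((J v hv - 1 : ℕ) : ZMod n) = x := by
    intro v hv x
    rw [hB]
    simp only [dif_pos hv, Finset.mem_image, Finset.mem_range]
  have hcard : ∀ v (hv : f v = 2), (B v).card = 2 * J v hv := by
    intro v hv
    rw [hB]
    simp only [dif_pos hv]
    rw [Finset.card_image_of_injOn, Finset.card_range]
    intro t ht t' ht' h
    simp only [Finset.coe_range, Set.mem_Iio] at ht ht'
    dsimp only at h
    have hc : (t : ZMod n) = (t' : ZMod n) := by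
      have h' := sub_left_inj.mp h
      exact add_left_cancel h'
    have h2 := h2j v hv
    have := congrArg ZMod.val hc
    rwa [ZMod.val_cast_of_lt (by omega), ZMod.val_cast_of_lt (by omega)] at this
  -- structural description of members of a block
  have struct : ∀ v (hv : f v = 2) (x : ZMod n), x ∈ B v →
      (f x = 2 ∧ v = x) ∨
      (f x = 0 ∧ ∃ d : ℕ, 1 ≤ d ∧ f (x - (d : ZMod n)) = 2 ∧
        (∀ i : ℕ, 1 ≤ i → i < d → f (x - (i : ZMod n)) = 1) ∧ v = x - (d : ZMod n)) ∨
      (f x = 1 ∧ ∃ d : ℕ, 1 ≤ d ∧ (∀ t : ℕ, 1 ≤ t → t < d → f (x + (t : ZMod n)) = 1) ∧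
        f (x + (d : ZMod n)) = 2 ∧ v = x + (d : ZMod n)) ∨
      (f x = 1 ∧ ∃ d : ℕ, 1 ≤ d ∧ (∀ t : ℕ, 1 ≤ t → t < d → f (x + (t : ZMod n)) = 1) ∧
        f (x + (d : ZMod n)) = 0 ∧
        ∃ e : ℕ, 1 ≤ e ∧ f (x + (d : ZMod n) - (e : ZMod n)) = 2 ∧
          (∀ i : ℕ, 1 ≤ i → i < e → f (x + (d : ZMod n) - (i : ZMod n)) = 1) ∧
          v = x + (d : ZMod n) - (e : ZMod n)) := by
    intro v hv x hx
    obtain ⟨t, ht, hxe⟩ := (memB v hv x).mp hx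
    have hj1 := hJ1 v hv
    rcases Nat.lt_trichotomy t (J v hv - 1) with hcase | hcase | hcase
    · set i := J v hv - 1 - t with hi
      have hx' : x = v - (i : ZMod n) := by
        rw [← hxe, show J v hv - 1 = t + i by omega, Nat.cast_add]; ring
      refine Or.inr (Or.inr (Or.inl ⟨?_, i, by omega, ?_, ?_, ?_⟩))
      · rw [hx']; exact hS₂ v hv i (by omega) (by omega)
      · intro t' h1 h2
        have e1 : x + (t' : ZMod n) = v - ((i - t' : ℕ) : ZMod n) := by
          rw [Nat.cast_sub (by omega)]; rw [hx']; ring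
        rw [e1]; exact hS₂ v hv _ (by omega) (by omega)
      · have e1 : x + (i : ZMod n) = v := by rw [hx']; ring
        rw [e1]; exact hv
      · have e1 : x + (i : ZMod n) = v := by rw [hx']; ring
        rw [e1]
    · have hx' : x = v := by rw [← hxe, hcase]; ring
      exact Or.inl ⟨by rw [hx']; exact hv, hx'.symm⟩
    · set i := t - (J v hv - 1) with hi
      have hx' : x = v + (i : ZMod n) := by
        rw [← hxe, show t = (J v hv - 1) + i by omega, Nat.cast_add]; ring
      rcases Nat.lt_or_ge i (J v hv) with hij | hij
      · refine Or.inr (Or.inr (Or.inr ⟨?_, J v hv - i, by omega, ?_, ?_,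
          J v hv, by omega, ?_, ?_, ?_⟩))
        · rw [hx']; exact hS₁ v hv i (by omega) (by omega)
        · intro t' h1 h2
          have e1 : x + (t' : ZMod n) = v + ((i + t' : ℕ) : ZMod n) := by
            rw [Nat.cast_add]; rw [hx']; ring
          rw [e1]; exact hS₁ v hv _ (by omega) (by omega)
        · have e1 : x + ((J v hv - i : ℕ) : ZMod n) = v + ((J v hv : ℕ) : ZMod n) := by
            rw [Nat.cast_sub (by omega)]; rw [hx']; ring
          rw [e1]; exact hH₁ v hv
        · have e1 : x + ((J v hv - i : ℕ) : ZMod n) - ((J v hv : ℕ) : ZMod n) = v := by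
            rw [Nat.cast_sub (by omega)]; rw [hx']; ring
          rw [e1]; exact hv
        · intro i' h1 h2
          have e1 : x + ((J v hv - i : ℕ) : ZMod n) - (i' : ZMod n)
              = v + ((J v hv - i' : ℕ) : ZMod n) := by
            rw [Nat.cast_sub (show i ≤ J v hv by omega),
              Nat.cast_sub (show i' ≤ J v hv by omega)]; rw [hx']; ring
          rw [e1]; exact hS₁ v hv _ (by omega) (by omega)
        · have e1 : x + ((J v hv - i : ℕ) : ZMod n) - ((J v hv : ℕ) : ZMod n) = v := by
            rw [Nat.cast_sub (by omega)]; rw [hx']; ring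
          rw [e1]
      · have hij' : i = J v hv := by omega
        refine Or.inr (Or.inl ⟨?_, J v hv, by omega, ?_, ?_, ?_⟩)
        · rw [hx', hij']; exact hH₁ v hv
        · have e1 : x - ((J v hv : ℕ) : ZMod n) = v := by rw [hx', hij']; ring
          rw [e1]; exact hv
        · intro i' h1 h2
          have e1 : x - (i' : ZMod n) = v + ((J v hv - i' : ℕ) : ZMod n) := by
            rw [Nat.cast_sub (by omega)]; rw [hx', hij']; ring
          rw [e1]; exact hS₁ v hv _ (by omega) (by omega)
        · have e1 : x - ((J v hv : ℕ) : ZMod n) = v := by rw [hx', hij']; ring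
          rw [e1]
  -- two blocks meeting must be equal
  have hrec : ∀ v (hv : f v = 2) w (hw : f w = 2) x, x ∈ B v → x ∈ B w → v = w := by
    intro v hv w hw x hxv hxw
    rcases struct v hv x hxv with ⟨h2, hveq⟩ | ⟨h0, d, hd1, hd2, hd3, hd4⟩ |
      ⟨h1, d, hd1, hd2, hd3, hd4⟩ | ⟨h1, d, hd1, hd2, hd3, e, he1, he2, he3, he4⟩ <;>
    rcases struct w hw x hxw with ⟨h2', hweq⟩ | ⟨h0', d', hd1', hd2', hd3', hd4'⟩ |
      ⟨h1', d', hd1', hd2', hd3', hd4'⟩ | ⟨h1', d', hd1', hd2', hd3', e', he1', he2', he3', he4'⟩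
    · rw [hveq, hweq]
    all_goals try omega
    · -- hole / hole
      have hdd : d = d' := uniqS (fun i => x - (i : ZMod n)) d d' hd1 hd1'
        (show f (x - (d : ZMod n)) ≠ 1 by omega)
        (show f (x - (d' : ZMod n)) ≠ 1 by omega) hd3 hd3'
      rw [hd4, hd4', hdd]
    · -- sing-back / sing-back
      have hdd : d = d' := uniqS (fun i => x + (i : ZMod n)) d d' hd1 hd1'
        (show f (x + (d : ZMod n)) ≠ 1 by omega)
        (show f (x + (d' : ZMod n)) ≠ 1 by omega) hd2 hd2'
      rw [hd4, hd4', hdd]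
    · -- sing-back / sing-forward : impossible
      have hdd : d = d' := uniqS (fun i => x + (i : ZMod n)) d d' hd1 hd1'
        (show f (x + (d : ZMod n)) ≠ 1 by omega)
        (show f (x + (d' : ZMod n)) ≠ 1 by omega) hd2 hd2'
      rw [hdd] at hd3; omega
    · -- sing-forward / sing-back : impossible
      have hdd : d = d' := uniqS (fun i => x + (i : ZMod n)) d d' hd1 hd1'
        (show f (x + (d : ZMod n)) ≠ 1 by omega)
        (show f (x + (d' : ZMod n)) ≠ 1 by omega) hd2 hd2'
      rw [hdd] at hd3; omega
    · -- sing-forward / sing-forward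
      have hdd : d = d' := uniqS (fun i => x + (i : ZMod n)) d d' hd1 hd1'
        (show f (x + (d : ZMod n)) ≠ 1 by omega)
        (show f (x + (d' : ZMod n)) ≠ 1 by omega) hd2 hd2'
      subst hdd
      have hee : e = e' := uniqS (fun i => x + (d : ZMod n) - (i : ZMod n)) e e' he1 he1'
        (show f (x + (d : ZMod n) - (e : ZMod n)) ≠ 1 by omega)
        (show f (x + (d : ZMod n) - (e' : ZMod n)) ≠ 1 by omega) he3 he3'
      rw [he4, he4', hee]
  -- there is a hole
  have hole_ex : ∃ y, f y = 0 := by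
    have hne : (Finset.univ.filter fun v => f v = 0).Nonempty :=
      Finset.card_pos.mp (by omega)
    obtain ⟨y, hy⟩ := hne
    exact ⟨y, (Finset.mem_filter.mp hy).2⟩
  -- every node is in some block
  have hcover : ∀ x : ZMod n, ∃ v, ∃ hv : f v = 2, x ∈ B v := by
    intro x
    rcases hval x with hx0 | hx1 | hx2
    · -- x is a hole
      obtain ⟨a, b, ha, hb, hfa, hfb, hsa, hsb⟩ := halt_h x hx0
      set w := x - (b : ZMod n) with hw
      have hJb : J w hfb = b := by
        refine uniqS (fun i => w + (i : ZMod n)) _ b (hJ1 _ hfb) hb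
          (show f (w + ((J w hfb : ℕ) : ZMod n)) ≠ 1 by
            have := hH₁ _ hfb; omega)
          (show f (w + (b : ZMod n)) ≠ 1 by
            rw [show w + (b : ZMod n) = x by rw [hw]; ring]; omega)
          (hS₁ _ hfb) ?_
        intro i h1 h2
        show f (w + (i : ZMod n)) = 1
        rw [show w + (i : ZMod n) = x - ((b - i : ℕ) : ZMod n) by
          rw [hw, Nat.cast_sub (by omega : i ≤ b)]; ring]
        exact hsb (b - i) (by omega) (by omega)
      refine ⟨w, hfb, (memB _ hfb x).mpr
        ⟨(J w hfb - 1) + J w hfb, by have := hJ1 _ hfb; omega, ?_⟩⟩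
      set jw := J w hfb with hjw
      rw [Nat.cast_add, hJb, hw]
      ring
    · -- x is a singleton
      obtain ⟨y, hy0⟩ := hole_ex
      have hyx : y ≠ x := by intro h; rw [h] at hy0; omega
      have hex : ∃ m : ℕ, f (x + ((m + 1 : ℕ) : ZMod n)) ≠ 1 := by
        refine ⟨(y - x).val - 1, ?_⟩
        have hvne : (y - x).val ≠ 0 := by
          intro h
          exact (sub_ne_zero.mpr hyx) ((ZMod.val_eq_zero _).mp h)
        rw [show (y - x).val - 1 + 1 = (y - x).val by omega,
          ZMod.natCast_rightInverse (y - x),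
          show x + (y - x) = y by ring]
        omega
      set m₀ := Nat.find hex with hm₀
      have hnef : f (x + ((m₀ + 1 : ℕ) : ZMod n)) ≠ 1 := Nat.find_spec hex
      have hmin : ∀ i, 1 ≤ i → i < m₀ + 1 → f (x + (i : ZMod n)) = 1 := by
        intro i h1 h2
        have hni := Nat.find_min hex (show i - 1 < m₀ by omega)
        rw [show i - 1 + 1 = i by omega] at hni
        exact not_not.mp hni
      rcases hval (x + ((m₀ + 1 : ℕ) : ZMod n)) with h0 | h1 | h2
      · -- first special node forward is a hole
        obtain ⟨a, b, ha, hb, hfa, hfb, hsa, hsb⟩ := halt_h (x + ((m₀ + 1 : ℕ) : ZMod n)) h0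
        have hbi : m₀ + 1 < b := by
          by_contra hle
          push_neg at hle
          rcases Nat.eq_or_lt_of_le hle with heq | hlt2
          · rw [show x + ((m₀ + 1 : ℕ) : ZMod n) - (b : ZMod n) = x by
              rw [← heq]; ring] at hfb
            omega
          · rw [show x + ((m₀ + 1 : ℕ) : ZMod n) - (b : ZMod n)
                = x + ((m₀ + 1 - b : ℕ) : ZMod n) by
              rw [Nat.cast_sub (by omega : b ≤ m₀ + 1)]; ring] at hfb
            have := hmin (m₀ + 1 - b) (by omega) (by omega)
            omega
        set w := x + ((m₀ + 1 : ℕ) : ZMod n) - (b : ZMod n) with hw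
        have hv : f w = 2 := hfb
        have hJb : J w hv = b := by
          refine uniqS (fun i => w + (i : ZMod n)) _ b (hJ1 _ hv) hb
            (show f (w + ((J w hv : ℕ) : ZMod n)) ≠ 1 by
              have := hH₁ _ hv; omega)
            (show f (w + (b : ZMod n)) ≠ 1 by
              rw [show w + (b : ZMod n) = x + ((m₀ + 1 : ℕ) : ZMod n) by rw [hw]; ring]
              omega)
            (hS₁ _ hv) ?_
          intro i h1 h2
          show f (w + (i : ZMod n)) = 1
          rw [show w + (i : ZMod n)
              = x + ((m₀ + 1 : ℕ) : ZMod n) - ((b - i : ℕ) : ZMod n) by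
            rw [hw, Nat.cast_sub (by omega : i ≤ b)]; ring]
          exact hsb (b - i) (by omega) (by omega)
        refine ⟨w, hv, (memB _ hv x).mpr
          ⟨(J w hv - 1) + (J w hv - (m₀ + 1)),
           by have := hJ1 _ hv; omega, ?_⟩⟩
        set jw := J w hv with hjw
        rw [Nat.cast_add, Nat.cast_sub (show m₀ + 1 ≤ jw by omega), hJb, hw]
        ring
      · exact absurd h1 hnef
      · -- first special node forward is a multinode
        set w := x + ((m₀ + 1 : ℕ) : ZMod n) with hw
        have hlt : m₀ + 1 < J w h2 := by
          by_contra hle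
          push_neg at hle
          have hj1' := hJ1 w h2
          have h0' := hH₂ w h2
          rcases Nat.eq_or_lt_of_le hle with heq | hlt2
          · rw [show w - ((J w h2 : ℕ) : ZMod n) = x by rw [heq, hw]; ring] at h0'
            omega
          · rw [show w - ((J w h2 : ℕ) : ZMod n)
                = x + ((m₀ + 1 - J w h2 : ℕ) : ZMod n) by
              rw [Nat.cast_sub (by omega : J w h2 ≤ m₀ + 1)]; linear_combination hw] at h0'
            have := hmin (m₀ + 1 - J w h2) (by omega) (by omega)
            omega
        refine ⟨w, h2, (memB _ h2 x).mpr
          ⟨J w h2 - 1 - (m₀ + 1), by omega, ?_⟩⟩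
        set jw := J w h2 with hjw
        rw [show jw - 1 - (m₀ + 1) = jw - 1 - (m₀ + 1) from rfl,
          Nat.cast_sub (show m₀ + 1 ≤ jw - 1 by omega), hw]
        ring
    · -- x is a multinode
      refine ⟨x, hx2, (memB x hx2 x).mpr ⟨J x hx2 - 1, by have := hJ1 x hx2; omega, by ring⟩⟩
  -- conclude by counting
  have hdisj : ∀ v ∈ Finset.univ.filter (fun v => f v = 2),
      ∀ w ∈ Finset.univ.filter (fun v => f v = 2), v ≠ w → Disjoint (B v) (B w) := by
    intro v hvm w hwm hvw
    rw [Finset.disjoint_left]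
    intro x hxv hxw
    exact hvw (hrec v (Finset.mem_filter.mp hvm).2 w (Finset.mem_filter.mp hwm).2 x hxv hxw)
  have huniv : (Finset.univ : Finset (ZMod n))
      = (Finset.univ.filter (fun v => f v = 2)).biUnion B := by
    refine Finset.Subset.antisymm (fun x _ => ?_) (Finset.subset_univ _)
    obtain ⟨v, hv, hxB⟩ := hcover x
    exact Finset.mem_biUnion.mpr ⟨v, Finset.mem_filter.mpr ⟨Finset.mem_univ v, hv⟩, hxB⟩
  have hcards : n = ∑ v ∈ Finset.univ.filter (fun v => f v = 2), (B v).card := by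
    calc n = (Finset.univ : Finset (ZMod n)).card := by rw [Finset.card_univ, ZMod.card]
    _ = ((Finset.univ.filter (fun v => f v = 2)).biUnion B).card := congrArg Finset.card huniv
    _ = _ := Finset.card_biUnion hdisj
  rw [hcards]
  refine Finset.dvd_sum ?_
  intro v hvm
  rw [hcard v (Finset.mem_filter.mp hvm).2]
  exact dvd_mul_right 2 _
end
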